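/- Polynomial step count corollary: if a program p_φ is in ST (safe and terminating), then p_φ has a polynomial step count, i.e. there is a polynomial P such that for every store μ and oracle φ, the derivation π_φ : μ ⊨ p_φ → w satisfies |π_φ| ≤ P(m(μ,π_φ)). -/

import Mathlib

namespace BFFpaper

/-! ### Words -/

/-- Words over the alphabet `{0,1}` (`false` = 0, `true` = 1). -/
abbrev W : Type := List Bool

/-- `padTrunc v w` truncates `v` to its first `min |v| |w|` symbols and pads the
result with a word of the form `10^k` so that the result has length `|w| + 1`. -/
def padTrunc (v w : W) : W :=
  v.take w.length ++ true :: List.replicate (w.length - (v.take w.length).length) false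

/-- Maximum of a list of naturals (0 for the empty list). -/
def maxList (l : List ℕ) : ℕ := l.foldr max 0

/-- `lrAux m l` counts the positions of `l` whose value strictly exceeds the
maximum of `m` and all previous values. -/
def lrAux : ℕ → List ℕ → ℕ
  | _, [] => 0
  | m, a :: l => if m < a then lrAux (max m a) l + 1 else lrAux m l

/-- Number of "lookahead revisions" in a sequence of oracle inputs: the number of
indices whose entry is strictly longer than all previous entries. -/
def lrCount (l : List W) : ℕ := lrAux 0 (l.map List.length)

/-! ### Oracle Turing machines -/

/-- Tape symbols: `none` is the blank symbol. -/
abbrev Sym := Option Bool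

/-- A (half-abstract) two-way infinite tape with a head: left part (reversed) and
right part, the head scanning the first symbol of the right part. -/
abbrev HTape := List Sym × List Sym

def tRead (t : HTape) : Sym := t.2.headD none

def tWrite (t : HTape) (s : Sym) : HTape := (t.1, s :: t.2.tail)

inductive Move | L | R | N
deriving DecidableEq

def tMove (t : HTape) : Move → HTape
  | .L => (t.1.tail, t.1.headD none :: t.2)
  | .R => (t.2.headD none :: t.1, t.2.tail)
  | .N => t

def tAct (t : HTape) (a : Sym × Move) : HTape := tMove (tWrite t a.1) a.2

/-- The word written on a tape starting at the head (up to the first blank). -/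
def tWord (t : HTape) : W := (t.2.takeWhile fun s => s.isSome).filterMap id

def ofWord (w : W) : HTape := ([], w.map some)

/-- A deterministic oracle Turing machine with `k` (unary, word-valued) oracles,
an input tape, a query tape, an answer tape and a work tape.  The transition
function reads the state and the four scanned symbols and either halts (`none`)
or produces a new state, a write/move action for each tape and an optional
oracle index: if an oracle index `i` is produced, the machine poses the content
of the query tape as a query and the oracle answer `φ i q` appears on the answer
tape in this single step. -/
structure OTM (k : ℕ) where
  states : ℕ
  q₀ : Fin (states + 1)
  δ : Fin (states + 1) → Sym × Sym × Sym × Sym →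
      Option (Fin (states + 1) × (Sym × Move) × (Sym × Move) × (Sym × Move) × (Sym × Move) ×
        Option (Fin k))

/-- Configurations of an oracle Turing machine. -/
structure Cfg (k : ℕ) (M : OTM k) where
  q : Fin (M.states + 1)
  inp : HTape
  qry : HTape
  ans : HTape
  wrk : HTape

namespace OTM

variable {k : ℕ}

def reads (M : OTM k) (c : Cfg k M) : Sym × Sym × Sym × Sym :=
  (tRead c.inp, tRead c.qry, tRead c.ans, tRead c.wrk)

/-- One step of the machine (`none` when the machine halts). -/
def step (M : OTM k) (φ : Fin k → W → W) (c : Cfg k M) : Option (Cfg k M) :=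
  match M.δ c.q (M.reads c) with
  | none => none
  | some (q', ai, aq, aa, aw, oq) =>
    let qry' := tAct c.qry aq
    some { q := q', inp := tAct c.inp ai, qry := qry',
           ans := match oq with
                  | none => tAct c.ans aa
                  | some i => ofWord (φ i (tWord qry'))
           wrk := tAct c.wrk aw }

/-- Running the machine for `n` steps (`none` if the machine halts earlier). -/
def run (M : OTM k) (φ : Fin k → W → W) : ℕ → Cfg k M → Option (Cfg k M)
  | 0, c => some c
  | n + 1, c => (M.step φ c).bind (M.run φ n)

/-- The (oracle index, query word) posed by the present step, if it is a query step. -/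
def stepQuery (M : OTM k) (c : Cfg k M) : List (Fin k × W) :=
  match M.δ c.q (M.reads c) with
  | some (_, _, aq, _, _, some i) => [(i, tWord (tAct c.qry aq))]
  | _ => []

/-- The list of queries posed during the first `n` steps of the run from `c`,
in chronological order. -/
def queries (M : OTM k) (φ : Fin k → W → W) : ℕ → Cfg k M → List (Fin k × W)
  | 0, _ => []
  | n + 1, c =>
    M.stepQuery c ++ (match M.step φ c with
      | none => []
      | some c' => M.queries φ n c')

/-- Initial configuration on a list of input words (separated by blanks on the
input tape). -/
def init (M : OTM k) (a : List W) : Cfg k M :=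
  { q := M.q₀, inp := ([], List.intercalate [none] (a.map fun w => w.map some)),
    qry := ([], []), ans := ([], []), wrk := ([], []) }

/-- The machine, with oracles `φ`, halts after exactly `n` steps from `c₀` in
configuration `c'`. -/
def HaltsAt (M : OTM k) (φ : Fin k → W → W) (c₀ : Cfg k M) (n : ℕ) (c' : Cfg k M) : Prop :=
  M.run φ n c₀ = some c' ∧ M.step φ c' = none

/-- The machine computes the type-2 functional `F` (output read off the work tape). -/
def Computes {m : ℕ} (M : OTM k) (F : (Fin k → W → W) → (Fin m → W) → W) : Prop :=
  ∀ (φ : Fin k → W → W) (v : Fin m → W),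
    ∃ n c', M.HaltsAt φ (M.init (List.ofFn v)) n c' ∧ tWord c'.wrk = F φ v

/-- Polynomial step count: the running time is bounded by a (type-1) polynomial in
the maximum of the input size and the sizes of all oracle answers during the run. -/
def PolyStepCount (M : OTM k) : Prop :=
  ∃ P : Polynomial ℕ, ∀ (φ : Fin k → W → W) (a : List W) (n : ℕ) (c' : Cfg k M),
    M.HaltsAt φ (M.init a) n c' →
      n ≤ P.eval (max (maxList (a.map List.length))
        (maxList ((M.queries φ n (M.init a)).map fun iw => (φ iw.1 iw.2).length)))

/-- Finite lookahead revision: on any oracle and any input, it happens at most `r`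
times that a query is posed whose size exceeds the sizes of all previous queries. -/
def FiniteLookahead (M : OTM k) : Prop :=
  ∃ r : ℕ, ∀ (φ : Fin k → W → W) (a : List W) (n : ℕ),
    lrAux 0 ((M.queries φ n (M.init a)).map fun iw => iw.2.length) ≤ r

end OTM

/-! ### Second-order polynomials and the basic feasible functionals -/

/-- Second-order polynomials in `k` length-functions and `m` first-order variables. -/
inductive SOP (k m : ℕ)
  | var : Fin m → SOP k m
  | const : ℕ → SOP k m
  | add : SOP k m → SOP k m → SOP k m
  | mul : SOP k m → SOP k m → SOP k m
  | app : Fin k → SOP k m → SOP k m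

def SOP.eval {k m : ℕ} (L : Fin k → ℕ → ℕ) (v : Fin m → ℕ) : SOP k m → ℕ
  | .var i => v i
  | .const c => c
  | .add p q => p.eval L v + q.eval L v
  | .mul p q => p.eval L v * q.eval L v
  | .app i p => L i (p.eval L v)

/-- The length function `|φ|` of an oracle: `|φ|(n)` is the maximal size of `φ w`
over words `w` of length at most `n`. -/
noncomputable def lenFun (φ : W → W) (n : ℕ) : ℕ :=
  sSup ((fun w => (φ w).length) '' { w : W | w.length ≤ n })

/-- Kapron–Cook style basic feasible functionals with `k` oracles and `m` word
arguments: computable by an oracle Turing machine whose running time is bounded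
by a second-order polynomial in the lengths `|φᵢ|` of the oracles and the sizes of
the inputs. -/
def BFFkm (k m : ℕ) : Set ((Fin k → W → W) → (Fin m → W) → W) :=
  { F | ∃ M : OTM k, M.Computes F ∧ ∃ P : SOP k m,
      ∀ (φ : Fin k → W → W) (v : Fin m → W) (n : ℕ) (c' : Cfg k M),
        M.HaltsAt φ (M.init (List.ofFn v)) n c' →
          n ≤ P.eval (fun i => lenFun (φ i)) (fun j => (v j).length) }

/-- The class `FP` of `m`-ary polynomial time computable (type-1) functions. -/
def FPm (m : ℕ) : Set ((Fin m → W) → W) :=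
  { F | ∃ M : OTM 0, M.Computes (fun _ v => F v) ∧ ∃ P : SOP 0 m,
      ∀ (φ : Fin 0 → W → W) (v : Fin m → W) (n : ℕ) (c' : Cfg 0 M),
        M.HaltsAt φ (M.init (List.ofFn v)) n c' →
          n ≤ P.eval (fun i => i.elim0) (fun j => (v j).length) }

/-- Moderately polynomial time functionals with `m` word arguments: computable by
an oracle machine with polynomial step count and finite lookahead revision. -/
def MPTm (m : ℕ) : Set ((W → W) → (Fin m → W) → W) :=
  { F | ∃ M : OTM 1, M.Computes (fun φs v => F (φs 0) v) ∧
      M.PolyStepCount ∧ M.FiniteLookahead }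

/-- The class MPT of type-2 functionals `(W → W) → W → W`. -/
def MPT : Set ((W → W) → W → W) := { F | (fun φ v => F φ (v 0)) ∈ MPTm 1 }

/-! ### Simple types, lambda terms and lambda closures -/

/-- Simple types over the base type of words. -/
inductive Ty
  | base : Ty
  | arrow : Ty → Ty → Ty

/-- Set-theoretic interpretation of simple types. -/
def Ty.interp : Ty → Type
  | .base => W
  | .arrow a b => a.interp → b.interp

/-- Type level. -/
def Ty.lev : Ty → ℕ
  | .base => 0
  | .arrow a b => max (a.lev + 1) b.lev

/-- A class of functionals: a set of functionals at each simple type. -/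
abbrev FClass := ∀ τ : Ty, Set τ.interp

/-- Simply typed lambda terms with constants from the class `X`. -/
inductive Tm (X : FClass) : List Ty → Ty → Type
  | var : ∀ {Γ : List Ty} (i : Fin Γ.length), Tm X Γ (Γ.get i)
  | con : ∀ {Γ : List Ty} {τ : Ty} (f : τ.interp), f ∈ X τ → Tm X Γ τ
  | lam : ∀ {Γ : List Ty} {σ τ : Ty}, Tm X (σ :: Γ) τ → Tm X Γ (.arrow σ τ)
  | app : ∀ {Γ : List Ty} {σ τ : Ty}, Tm X Γ (.arrow σ τ) → Tm X Γ σ → Tm X Γ τ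

/-- Denotational semantics of lambda terms. -/
def Tm.denote {X : FClass} : ∀ {Γ : List Ty} {τ : Ty},
    Tm X Γ τ → ((i : Fin Γ.length) → (Γ.get i).interp) → τ.interp
  | _, _, .var i, env => env i
  | _, _, .con f _, _ => f
  | Γ, _, .lam (σ := σ) t, env => fun a =>
      t.denote (fun i => Fin.cases (motive := fun i => (((σ :: Γ).get i)).interp) a env i)
  | _, _, .app t s, env => (t.denote env) (s.denote env)

/-- The simply typed lambda closure `λ(X)` of a class of functionals. -/
def lambdaCl (X : FClass) : FClass := fun τ =>
  { f | ∃ t : Tm X [] τ, t.denote (fun i => i.elim0) = f }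

/-- Restriction of a class to functionals of type level 2. -/
def levelTwo (X : FClass) : FClass := fun τ => { f | τ.lev = 2 ∧ f ∈ X τ }

/-- `λ(X)₂`: the type-2 restriction of the simply typed lambda closure of `X`. -/
def lambdaTwo (X : FClass) : FClass := levelTwo (lambdaCl X)

/-- The simple type `W → ⋯ → W → W` with `m` word arguments. -/
def tyW1 : ℕ → Ty
  | 0 => .base
  | m + 1 => .arrow .base (tyW1 m)

/-- The simple type `(W → W) → ⋯ → (W → W) → W → ⋯ → W → W` with `k` oracle
arguments and `m` word arguments. -/
def tyKM : ℕ → ℕ → Ty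
  | 0, m => tyW1 m
  | k + 1, m => .arrow (.arrow .base .base) (tyKM k m)

def curryW : ∀ m : ℕ, ((Fin m → W) → W) → (tyW1 m).interp
  | 0, F => F Fin.elim0
  | m + 1, F => fun a => curryW m (fun v => F (Fin.cons a v))

def curryKM : ∀ k m : ℕ, ((Fin k → W → W) → (Fin m → W) → W) → (tyKM k m).interp
  | 0, m, F => curryW m (F Fin.elim0)
  | k + 1, m, F => fun φ => curryKM k m (fun φs => F (Fin.cons φ φs))

/-- The class of functionals (at all simple types) obtained from a family of
multi-ary functionals by currying. -/
def classKM (S : ∀ k m : ℕ, Set ((Fin k → W → W) → (Fin m → W) → W)) : FClass :=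
  fun _τ f => ∃ k m F, F ∈ S k m ∧ HEq f (curryKM k m F)

/-- The class `BFF₂` of type-2 basic feasible functionals, at all level-2 types. -/
def BFF2 : FClass := lambdaTwo (classKM BFFkm)

/-! ### The imperative language with oracles -/

/-- A signature: a set of operators with arities and total word semantics. -/
structure Sig where
  Op : Type
  ar : Op → ℕ
  sem : ∀ o : Op, (Fin (ar o) → W) → W

/-- Expressions. -/
inductive Expr (S : Sig)
  | var : ℕ → Expr S
  | op : (o : S.Op) → (Fin (S.ar o) → Expr S) → Expr S
  | orac : Expr S → Expr S → Expr S

/-- Commands. -/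
inductive Cmd (S : Sig)
  | skip : Cmd S
  | assign : ℕ → Expr S → Cmd S
  | seq : Cmd S → Cmd S → Cmd S
  | ite : Expr S → Cmd S → Cmd S → Cmd S
  | wh : Expr S → Cmd S → Cmd S

/-- Programs: a command together with a return variable. -/
structure Prog (S : Sig) where
  cmd : Cmd S
  ret : ℕ

variable {S : Sig}

/-- Evaluation of expressions (stores are total maps from variables to words). -/
def evalE (S : Sig) (φ : W → W) (μ : ℕ → W) : Expr S → W
  | .var x => μ x
  | .op o a => S.sem o (fun i => evalE S φ μ (a i))
  | .orac e₁ e₂ => φ (padTrunc (evalE S φ μ e₁) (evalE S φ μ e₂))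

/-- Size (number of nodes) of the evaluation derivation of an expression. -/
def sizeE : Expr S → ℕ
  | .var _ => 1
  | .op _ a => 1 + ∑ i, sizeE (a i)
  | .orac e₁ e₂ => 1 + sizeE e₁ + sizeE e₂

/-- The sequence of oracle input values occurring in the evaluation of an
expression, in left-to-right order. -/
def queriesE (S : Sig) (φ : W → W) (μ : ℕ → W) : Expr S → List W
  | .var _ => []
  | .op _ a => (List.ofFn fun i => queriesE S φ μ (a i)).flatten
  | .orac e₁ e₂ => queriesE S φ μ e₁ ++ queriesE S φ μ e₂ ++
      [padTrunc (evalE S φ μ e₁) (evalE S φ μ e₂)]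

/-- Big-step operational semantics of commands, instrumented with the size of
the derivation and the chronological list of oracle input values. -/
inductive EvalC (S : Sig) (φ : W → W) : Cmd S → (ℕ → W) → (ℕ → W) → ℕ → List W → Prop
  | skip {μ} : EvalC S φ .skip μ μ 1 []
  | assign {μ x e} :
      EvalC S φ (.assign x e) μ (Function.update μ x (evalE S φ μ e)) (sizeE e + 1)
        (queriesE S φ μ e)
  | seq {c₁ c₂ μ μ₁ μ₂ n₁ n₂ q₁ q₂} :
      EvalC S φ c₁ μ μ₁ n₁ q₁ → EvalC S φ c₂ μ₁ μ₂ n₂ q₂ →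
      EvalC S φ (.seq c₁ c₂) μ μ₂ (n₁ + n₂ + 1) (q₁ ++ q₂)
  | ifT {e c₁ c₀ μ μ' n q} :
      evalE S φ μ e = [true] → EvalC S φ c₁ μ μ' n q →
      EvalC S φ (.ite e c₁ c₀) μ μ' (sizeE e + n + 1) (queriesE S φ μ e ++ q)
  | ifF {e c₁ c₀ μ μ' n q} :
      evalE S φ μ e = [false] → EvalC S φ c₀ μ μ' n q →
      EvalC S φ (.ite e c₁ c₀) μ μ' (sizeE e + n + 1) (queriesE S φ μ e ++ q)
  | whF {e c μ} :
      evalE S φ μ e = [false] →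
      EvalC S φ (.wh e c) μ μ (sizeE e + 1) (queriesE S φ μ e)
  | whT {e c μ μ₁ μ₂ n₁ n₂ q₁ q₂} :
      evalE S φ μ e = [true] → EvalC S φ c μ μ₁ n₁ q₁ →
      EvalC S φ (.wh e c) μ₁ μ₂ n₂ q₂ →
      EvalC S φ (.wh e c) μ μ₂ (sizeE e + n₁ + n₂ + 1) (queriesE S φ μ e ++ q₁ ++ q₂)

/-! ### Syntactic notions -/

/-- Variables of an expression. -/
def varsE : Expr S → Finset ℕ
  | .var x => {x}
  | .op _ a => Finset.univ.biUnion fun i => varsE (a i)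
  | .orac e₁ e₂ => varsE e₁ ∪ varsE e₂

/-- Variables of a command. -/
def varsC : Cmd S → Finset ℕ
  | .skip => ∅
  | .assign x e => insert x (varsE e)
  | .seq c₁ c₂ => varsC c₁ ∪ varsC c₂
  | .ite e c₁ c₂ => varsE e ∪ varsC c₁ ∪ varsC c₂
  | .wh e c => varsE e ∪ varsC c

/-- Variables assigned to in a command. -/
def AssignedIn (x : ℕ) : Cmd S → Prop
  | .skip => False
  | .assign y _ => x = y
  | .seq c₁ c₂ => AssignedIn x c₁ ∨ AssignedIn x c₂
  | .ite _ c₁ c₂ => AssignedIn x c₁ ∨ AssignedIn x c₂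
  | .wh _ c => AssignedIn x c

/-- Subexpression occurrence. -/
inductive SubExpr : Expr S → Expr S → Prop
  | refl (e : Expr S) : SubExpr e e
  | op {e : Expr S} {o : S.Op} {a : Fin (S.ar o) → Expr S} (i : Fin (S.ar o)) :
      SubExpr e (a i) → SubExpr e (.op o a)
  | oracL {e e₁ e₂ : Expr S} : SubExpr e e₁ → SubExpr e (.orac e₁ e₂)
  | oracR {e e₁ e₂ : Expr S} : SubExpr e e₂ → SubExpr e (.orac e₁ e₂)

/-- Occurrence of an expression in a command. -/
inductive ExprInCmd : Expr S → Cmd S → Prop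
  | assign {e e' : Expr S} {x : ℕ} : SubExpr e e' → ExprInCmd e (.assign x e')
  | seqL {e c₁ c₂} : ExprInCmd e c₁ → ExprInCmd e (.seq c₁ c₂)
  | seqR {e c₁ c₂} : ExprInCmd e c₂ → ExprInCmd e (.seq c₁ c₂)
  | iteG {e e' c₁ c₂} : SubExpr e e' → ExprInCmd e (.ite e' c₁ c₂)
  | iteL {e e' c₁ c₂} : ExprInCmd e c₁ → ExprInCmd e (.ite e' c₁ c₂)
  | iteR {e e' c₁ c₂} : ExprInCmd e c₂ → ExprInCmd e (.ite e' c₁ c₂)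
  | whG {e e' c} : SubExpr e e' → ExprInCmd e (.wh e' c)
  | whB {e e' c} : ExprInCmd e c → ExprInCmd e (.wh e' c)

/-- Occurrence of a command in a command. -/
inductive CmdInCmd : Cmd S → Cmd S → Prop
  | refl (c : Cmd S) : CmdInCmd c c
  | seqL {c c₁ c₂} : CmdInCmd c c₁ → CmdInCmd c (.seq c₁ c₂)
  | seqR {c c₁ c₂} : CmdInCmd c c₂ → CmdInCmd c (.seq c₁ c₂)
  | iteL {c e c₁ c₂} : CmdInCmd c c₁ → CmdInCmd c (.ite e c₁ c₂)
  | iteR {c e c₁ c₂} : CmdInCmd c c₂ → CmdInCmd c (.ite e c₁ c₂)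
  | whB {c e c'} : CmdInCmd c c' → CmdInCmd c (.wh e c')

/-- All operators occurring in an expression are neutral (w.r.t. predicate `N`). -/
def OpsSat (N : S.Op → Prop) : Expr S → Prop
  | .var _ => True
  | .op o a => N o ∧ ∀ i, OpsSat N (a i)
  | .orac e₁ e₂ => OpsSat N e₁ ∧ OpsSat N e₂

/-- No oracle call occurs in the expression. -/
def OracleFreeE : Expr S → Prop
  | .var _ => True
  | .op _ a => ∀ i, OracleFreeE (a i)
  | .orac _ _ => False

/-- No oracle call occurs in the command. -/
def OracleFreeC : Cmd S → Prop
  | .skip => True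
  | .assign _ e => OracleFreeE e
  | .seq c₁ c₂ => OracleFreeC c₁ ∧ OracleFreeC c₂
  | .ite e c₁ c₂ => OracleFreeE e ∧ OracleFreeC c₁ ∧ OracleFreeC c₂
  | .wh e c => OracleFreeE e ∧ OracleFreeC c

/-! ### Neutral and positive operators, safe environments -/

/-- Neutral operators: constants, predicates, or operators computing a subword
of one of their arguments. -/
def Sig.Neutral (S : Sig) (o : S.Op) : Prop :=
  S.ar o = 0 ∨ (∀ v, S.sem o v = [false] ∨ S.sem o v = [true]) ∨
    (∀ v, ∃ i, S.sem o v <:+: v i)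

/-- Positive operators: the size of the output is bounded by the maximal size of
the arguments plus a constant. -/
def Sig.Positive (S : Sig) (o : S.Op) : Prop :=
  ∃ c : ℕ, ∀ v, (S.sem o v).length ≤ (Finset.univ.sup fun i => (v i).length) + c

/-- The semantics of the operator is polynomial time computable. -/
def Sig.PolyTimeOp (S : Sig) (o : S.Op) : Prop :=
  (fun v => S.sem o v) ∈ FPm (S.ar o)

/-- Operator typing environments: to each operator and each innermost tier, a set
of admissible operator types `t₁ → ⋯ → t_{ar op} → t`. -/
abbrev OpEnv (S : Sig) := ∀ o : S.Op, ℕ → Set ((Fin (S.ar o) → ℕ) × ℕ)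

/-- Safe operator typing environments. -/
def SafeDelta (S : Sig) (Δ : OpEnv S) : Prop :=
  ∀ (o : S.Op) (tin : ℕ) (tv : Fin (S.ar o) → ℕ) (t : ℕ), (tv, t) ∈ Δ o tin →
    (0 < S.ar o → (S.Neutral o ∨ S.Positive o) ∧ S.PolyTimeOp o) ∧
    (∀ i, t ≤ tv i) ∧ (∀ i, tv i ≤ tin) ∧ t ≤ tin ∧
    (S.Positive o ∧ ¬ S.Neutral o → t < tin)

/-! ### The tier-based type system -/

/-- Typing judgments for expressions: `TE S Γ Δ e t ti to`. -/
inductive TE (S : Sig) (Γ : ℕ → ℕ) (Δ : OpEnv S) : Expr S → ℕ → ℕ → ℕ → Prop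
  | var {x tin tout} : TE S Γ Δ (.var x) (Γ x) tin tout
  | op {o : S.Op} {a tv t tin tout} : (tv, t) ∈ Δ o tin →
      (∀ i, TE S Γ Δ (a i) (tv i) tin tout) → TE S Γ Δ (.op o a) t tin tout
  | orac {e₁ e₂ t tin tout} : TE S Γ Δ e₁ t tin tout → TE S Γ Δ e₂ tout tin tout →
      t < tin → t ≤ tout → TE S Γ Δ (.orac e₁ e₂) t tin tout

/-- Typing judgments for commands: `TC S Γ Δ c t ti to`. -/
inductive TC (S : Sig) (Γ : ℕ → ℕ) (Δ : OpEnv S) : Cmd S → ℕ → ℕ → ℕ → Prop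
  | sub {c t tin tout} : TC S Γ Δ c t tin tout → TC S Γ Δ c (t + 1) tin tout
  | skip {tin tout} : TC S Γ Δ .skip 0 tin tout
  | assign {x e t' tin tout} : TE S Γ Δ e t' tin tout → Γ x ≤ t' →
      TC S Γ Δ (.assign x e) (Γ x) tin tout
  | seq {c₁ c₂ t tin tout} : TC S Γ Δ c₁ t tin tout → TC S Γ Δ c₂ t tin tout →
      TC S Γ Δ (.seq c₁ c₂) t tin tout
  | ite {e c₁ c₂ t tin tout} : TE S Γ Δ e t tin tout → TC S Γ Δ c₁ t tin tout →
      TC S Γ Δ c₂ t tin tout → TC S Γ Δ (.ite e c₁ c₂) t tin tout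
  | whW {e c t tin tout} : TE S Γ Δ e t tin tout → TC S Γ Δ c t t tout →
      1 ≤ t → t ≤ tout → TC S Γ Δ (.wh e c) t tin tout
  | wh0 {e c t tin} : TE S Γ Δ e t tin t → TC S Γ Δ c t t t →
      1 ≤ t → TC S Γ Δ (.wh e c) t tin 0

/-! ### Typing derivations as trees -/

mutual
/-- Typing derivation trees for expressions. -/
inductive DE (S : Sig) (Γ : ℕ → ℕ) (Δ : OpEnv S) : Expr S → ℕ → ℕ → ℕ → Type
  | var (x tin tout : ℕ) : DE S Γ Δ (.var x) (Γ x) tin tout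
  | op {o : S.Op} {a tv t tin tout} : (tv, t) ∈ Δ o tin →
      (∀ i, DE S Γ Δ (a i) (tv i) tin tout) → DE S Γ Δ (.op o a) t tin tout
  | orac {e₁ e₂ t tin tout} : DE S Γ Δ e₁ t tin tout → DE S Γ Δ e₂ tout tin tout →
      t < tin → t ≤ tout → DE S Γ Δ (.orac e₁ e₂) t tin tout

/-- Typing derivation trees for commands. -/
inductive DC (S : Sig) (Γ : ℕ → ℕ) (Δ : OpEnv S) : Cmd S → ℕ → ℕ → ℕ → Type
  | sub {c t tin tout} : DC S Γ Δ c t tin tout → DC S Γ Δ c (t + 1) tin tout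
  | skip (tin tout : ℕ) : DC S Γ Δ .skip 0 tin tout
  | assign {x e t' tin tout} : DE S Γ Δ e t' tin tout → Γ x ≤ t' →
      DC S Γ Δ (.assign x e) (Γ x) tin tout
  | seq {c₁ c₂ t tin tout} : DC S Γ Δ c₁ t tin tout → DC S Γ Δ c₂ t tin tout →
      DC S Γ Δ (.seq c₁ c₂) t tin tout
  | ite {e c₁ c₂ t tin tout} : DE S Γ Δ e t tin tout → DC S Γ Δ c₁ t tin tout →
      DC S Γ Δ c₂ t tin tout → DC S Γ Δ (.ite e c₁ c₂) t tin tout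
  | whW {e c t tin tout} : DE S Γ Δ e t tin tout → DC S Γ Δ c t t tout →
      1 ≤ t → t ≤ tout → DC S Γ Δ (.wh e c) t tin tout
  | wh0 {e c t tin} : DE S Γ Δ e t tin t → DC S Γ Δ c t t t →
      1 ≤ t → DC S Γ Δ (.wh e c) t tin 0
end

/-- `SubC ρ ρ'`: the command typing derivation `ρ` is a subderivation (subtree) of
`ρ'`, i.e. `ρ ∈ D(ρ')`. -/
inductive SubC {S : Sig} {Γ : ℕ → ℕ} {Δ : OpEnv S} :
    ∀ {c₁ t₁ i₁ o₁ c₂ t₂ i₂ o₂}, DC S Γ Δ c₁ t₁ i₁ o₁ → DC S Γ Δ c₂ t₂ i₂ o₂ → Prop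
  | refl {c t tin tout} (ρ : DC S Γ Δ c t tin tout) : SubC ρ ρ
  | sub {c₁ t₁ i₁ o₁ c t tin tout} {ρ : DC S Γ Δ c₁ t₁ i₁ o₁} {ρ' : DC S Γ Δ c t tin tout} :
      SubC ρ ρ' → SubC ρ (DC.sub ρ')
  | seqL {c₁ t₁ i₁ o₁ ca cb t tin tout} {ρ : DC S Γ Δ c₁ t₁ i₁ o₁}
      {ρa : DC S Γ Δ ca t tin tout} {ρb : DC S Γ Δ cb t tin tout} :
      SubC ρ ρa → SubC ρ (DC.seq ρa ρb)
  | seqR {c₁ t₁ i₁ o₁ ca cb t tin tout} {ρ : DC S Γ Δ c₁ t₁ i₁ o₁}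
      {ρa : DC S Γ Δ ca t tin tout} {ρb : DC S Γ Δ cb t tin tout} :
      SubC ρ ρb → SubC ρ (DC.seq ρa ρb)
  | iteL {c₁ t₁ i₁ o₁ e ca cb t tin tout} {ρ : DC S Γ Δ c₁ t₁ i₁ o₁}
      {ρe : DE S Γ Δ e t tin tout} {ρa : DC S Γ Δ ca t tin tout} {ρb : DC S Γ Δ cb t tin tout} :
      SubC ρ ρa → SubC ρ (DC.ite ρe ρa ρb)
  | iteR {c₁ t₁ i₁ o₁ e ca cb t tin tout} {ρ : DC S Γ Δ c₁ t₁ i₁ o₁}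
      {ρe : DE S Γ Δ e t tin tout} {ρa : DC S Γ Δ ca t tin tout} {ρb : DC S Γ Δ cb t tin tout} :
      SubC ρ ρa → SubC ρ (DC.ite ρe ρb ρa)
  | whW {c₁ t₁ i₁ o₁ e c t tin tout} {ρ : DC S Γ Δ c₁ t₁ i₁ o₁}
      {ρe : DE S Γ Δ e t tin tout} {ρc : DC S Γ Δ c t t tout} {h₁ : 1 ≤ t} {h₂ : t ≤ tout} :
      SubC ρ ρc → SubC ρ (DC.whW ρe ρc h₁ h₂)
  | wh0 {c₁ t₁ i₁ o₁ e c t tin} {ρ : DC S Γ Δ c₁ t₁ i₁ o₁}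
      {ρe : DE S Γ Δ e t tin t} {ρc : DC S Γ Δ c t t t} {h₁ : 1 ≤ t} :
      SubC ρ ρc → SubC ρ (DC.wh0 ρe ρc h₁)

/-- `SSubC ρ ρ'`: `ρ` is a *strict* subderivation of `ρ'`, i.e. `ρ ∈ D̊(ρ')`. -/
inductive SSubC {S : Sig} {Γ : ℕ → ℕ} {Δ : OpEnv S} :
    ∀ {c₁ t₁ i₁ o₁ c₂ t₂ i₂ o₂}, DC S Γ Δ c₁ t₁ i₁ o₁ → DC S Γ Δ c₂ t₂ i₂ o₂ → Prop
  | sub {c₁ t₁ i₁ o₁ c t tin tout} {ρ : DC S Γ Δ c₁ t₁ i₁ o₁} {ρ' : DC S Γ Δ c t tin tout} :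
      SubC ρ ρ' → SSubC ρ (DC.sub ρ')
  | seqL {c₁ t₁ i₁ o₁ ca cb t tin tout} {ρ : DC S Γ Δ c₁ t₁ i₁ o₁}
      {ρa : DC S Γ Δ ca t tin tout} {ρb : DC S Γ Δ cb t tin tout} :
      SubC ρ ρa → SSubC ρ (DC.seq ρa ρb)
  | seqR {c₁ t₁ i₁ o₁ ca cb t tin tout} {ρ : DC S Γ Δ c₁ t₁ i₁ o₁}
      {ρa : DC S Γ Δ ca t tin tout} {ρb : DC S Γ Δ cb t tin tout} :
      SubC ρ ρb → SSubC ρ (DC.seq ρa ρb)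
  | iteL {c₁ t₁ i₁ o₁ e ca cb t tin tout} {ρ : DC S Γ Δ c₁ t₁ i₁ o₁}
      {ρe : DE S Γ Δ e t tin tout} {ρa : DC S Γ Δ ca t tin tout} {ρb : DC S Γ Δ cb t tin tout} :
      SubC ρ ρa → SSubC ρ (DC.ite ρe ρa ρb)
  | iteR {c₁ t₁ i₁ o₁ e ca cb t tin tout} {ρ : DC S Γ Δ c₁ t₁ i₁ o₁}
      {ρe : DE S Γ Δ e t tin tout} {ρa : DC S Γ Δ ca t tin tout} {ρb : DC S Γ Δ cb t tin tout} :
      SubC ρ ρa → SSubC ρ (DC.ite ρe ρb ρa)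
  | whW {c₁ t₁ i₁ o₁ e c t tin tout} {ρ : DC S Γ Δ c₁ t₁ i₁ o₁}
      {ρe : DE S Γ Δ e t tin tout} {ρc : DC S Γ Δ c t t tout} {h₁ : 1 ≤ t} {h₂ : t ≤ tout} :
      SubC ρ ρc → SSubC ρ (DC.whW ρe ρc h₁ h₂)
  | wh0 {c₁ t₁ i₁ o₁ e c t tin} {ρ : DC S Γ Δ c₁ t₁ i₁ o₁}
      {ρe : DE S Γ Δ e t tin t} {ρc : DC S Γ Δ c t t t} {h₁ : 1 ≤ t} :
      SubC ρ ρc → SSubC ρ (DC.wh0 ρe ρc h₁)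

/-- The last rule of a command typing derivation is (W) or (W₀). -/
def DC.lastWhileIntro {S : Sig} {Γ : ℕ → ℕ} {Δ : OpEnv S} :
    ∀ {c t tin tout}, DC S Γ Δ c t tin tout → Prop
  | _, _, _, _, .whW _ _ _ _ => True
  | _, _, _, _, .wh0 _ _ _ => True
  | _, _, _, _, _ => False

/-! ### Safe programs, ST and the computed functionals -/

/-- A program is safe with respect to `Γ` and a safe `Δ` when its command is typable. -/
def SafeProg (S : Sig) (Γ : ℕ → ℕ) (Δ : OpEnv S) (p : Prog S) : Prop :=
  SafeDelta S Δ ∧ ∃ t tin tout, TC S Γ Δ p.cmd t tin tout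

def Prog.vars (p : Prog S) : Finset ℕ := varsC p.cmd ∪ {p.ret}

def Prog.varList (p : Prog S) : List ℕ := p.vars.sort (· ≤ ·)

/-- The number of input arguments of a program: one for each of its variables. -/
def Prog.arity (p : Prog S) : ℕ := p.varList.length

/-- The initial store associated with input values `v` (all other variables are ε). -/
def Prog.initStore (p : Prog S) (v : Fin p.arity → W) : ℕ → W := fun x =>
  if h : x ∈ p.varList then v ⟨p.varList.idxOf x, List.idxOf_lt_length_iff.mpr h⟩ else []

/-- `p.EvalP φ v w` : on oracle `φ` and inputs `v`, the program `p` terminates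
with result `w`. -/
def Prog.EvalP (p : Prog S) (φ : W → W) (v : Fin p.arity → W) (w : W) : Prop :=
  ∃ μ' n q, EvalC S φ p.cmd (p.initStore v) μ' n q ∧ w = μ' p.ret

/-- Termination on all oracles and inputs. -/
def Prog.Terminating (p : Prog S) : Prop := ∀ φ v, ∃ w, p.EvalP φ v w

open Classical in
/-- The (second-order) function computed by the program. -/
noncomputable def Prog.fn (p : Prog S) (φ : W → W) (v : Fin p.arity → W) : W :=
  if h : ∃ w, p.EvalP φ v w then h.choose else []

/-- `ST`: the safe and terminating programs. -/
def STset (S : Sig) : Set (Prog S) :=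
  { p | (∃ Γ Δ, SafeProg S Γ Δ p) ∧ p.Terminating }

/-- The `n`-ary type-2 functionals computed by programs in `ST`. -/
def STsemN (S : Sig) (n : ℕ) : Set ((W → W) → (Fin n → W) → W) :=
  { F | ∃ p ∈ STset S, ∃ h : p.arity = n,
      ∀ φ v, F φ v = p.fn φ (fun i => v (Fin.cast h i)) }

/-- `⟦ST⟧` as a family indexed by numbers of oracles and word arguments. -/
def STfam (S : Sig) : ∀ k m : ℕ, Set ((Fin k → W → W) → (Fin m → W) → W) :=
  fun k m F => k = 1 ∧ (fun φ v => F (fun _ => φ) v) ∈ STsemN S m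

/-- The type-1 functions computed by oracle-free programs of `ST`. -/
def STsem1 (S : Sig) (m : ℕ) : Set ((Fin m → W) → W) :=
  { F | ∃ p ∈ STset S, OracleFreeC p.cmd ∧ ∃ h : p.arity = m,
      ∀ v, F v = p.fn (fun _ => []) (fun i => v (Fin.cast h i)) }

/-- Programs in `ST` typable using only tiers `⪯ t` for the program variables. -/
def STtSet (S : Sig) (t : ℕ) : Set (Prog S) :=
  { p | (∃ Γ Δ, SafeDelta S Δ ∧ (∀ x ∈ p.vars, Γ x ≤ t) ∧
       ∃ t' tin tout, TC S Γ Δ p.cmd t' tin tout) ∧ p.Terminating }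

def STtFam (S : Sig) (t : ℕ) : ∀ k m : ℕ, Set ((Fin k → W → W) → (Fin m → W) → W) :=
  fun k m F => k = 1 ∧
    ∃ p ∈ STtSet S t, ∃ h : p.arity = m,
      ∀ φ v, F (fun _ => φ) v = p.fn φ (fun i => v (Fin.cast h i))

/-! ### Runtime measures -/

/-- Size of a store, restricted to the variables of the program. -/
def storeSize (p : Prog S) (μ : ℕ → W) : ℕ := ∑ x ∈ p.vars, (μ x).length

/-- `mval p φ μ q`: the maximum of the size of the store and of the sizes of all
oracle answers in the derivation (whose oracle inputs are `q`). -/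
def mval (p : Prog S) (φ : W → W) (μ : ℕ → W) (q : List W) : ℕ :=
  max (storeSize p μ) (maxList (q.map fun v => (φ v).length))

/-- Polynomial step count for programs. -/
def Prog.PolyStepCount (p : Prog S) : Prop :=
  ∃ P : Polynomial ℕ, ∀ (φ : W → W) (μ μ' : ℕ → W) (n : ℕ) (q : List W),
    EvalC S φ p.cmd μ μ' n q → n ≤ P.eval (mval p φ μ q)

/-- Finite lookahead revision for programs. -/
def Prog.FiniteLookahead (p : Prog S) : Prop :=
  ∃ r : ℕ, ∀ (φ : W → W) (μ μ' : ℕ → W) (n : ℕ) (q : List W),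
    EvalC S φ p.cmd μ μ' n q → lrCount q ≤ r

/-- Store equivalence at tier `t`: stores agree on all variables of tier `⪰ t`. -/
def storeEquiv (Γ : ℕ → ℕ) (t : ℕ) (μ₁ μ₂ : ℕ → W) : Prop :=
  ∀ x, t ≤ Γ x → μ₁ x = μ₂ x

/-! ### The full signature (all neutral/positive operators available) -/

/-- The signature containing every total word function as an operator. -/
def SigAll : Sig := ⟨(m : ℕ) × ((Fin m → W) → W), Sigma.fst, fun o => o.snd⟩

/-! ### Padded oracles -/

/-- Strip the `10^n` padding from a word: `stripPad (w ++ 1 ++ 0^n) = w`. -/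
def stripPad (v : W) : W := ((v.reverse.dropWhile fun b => !b).tail).reverse

/-- The padded version `φ̃` of an oracle `φ` : it satisfies `φ̃ (w10ⁿ) = φ w`. -/
def tildeOracle (φ : W → W) : W → W := fun v => φ (stripPad v)

/-!
The proof is an induction on the typing derivation, carrying three invariants of a command:
its derivation size is polynomial in the sizes of the variables of tier at least 1 and of the
oracle answers; its outputs at tiers `⪰ τ` are short words, unchanged values, or infixes of
initial values of higher tier; and the tier-`s` part of the store grows additively by a
polynomial in the tier-`(s + 1)` part.

The crux is a while loop typed at tier `t ⪰ 1`. By noninterference its guard and its body only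
see the tier-`⪰ t` part of the store, so a repetition of that part would make the loop diverge.
That part consists of short words and infixes of the initial values, so there are polynomially
many possibilities for it, which bounds the number of iterations; feeding this count into the
growth invariant, one tier at a time, bounds the sizes of all intermediate stores.
-/

theorem _root_.Polynomial.monotone_eval_nat (P : Polynomial ℕ) : Monotone P.eval := by
  intro a b hab
  simp only [Polynomial.eval_eq_sum_range]
  gcongr

theorem maxList_le_iff {l : List ℕ} {b : ℕ} : maxList l ≤ b ↔ ∀ a ∈ l, a ≤ b := by
  induction l with
  | nil => simp [maxList]
  | cons a l ih => simp [maxList, ← ih]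

theorem maxList_append (l l' : List ℕ) : maxList (l ++ l') = max (maxList l) (maxList l') :=
  le_antisymm (maxList_le_iff.2 fun a ha => by
      rcases List.mem_append.1 ha with h | h
      · exact le_max_of_le_left (maxList_le_iff.1 le_rfl a h)
      · exact le_max_of_le_right (maxList_le_iff.1 le_rfl a h))
    (max_le (maxList_le_iff.2 fun a ha => maxList_le_iff.1 le_rfl a (List.mem_append_left _ ha))
      (maxList_le_iff.2 fun a ha => maxList_le_iff.1 le_rfl a (List.mem_append_right _ ha)))

theorem le_max_add_mul_of_succ_le {a : ℕ → ℕ} {A g N : ℕ}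
    (h : ∀ i < N, a (i + 1) ≤ max (a i) A + g) : ∀ i ≤ N, a i ≤ max (a 0) A + i * g := by
  intro i
  induction i with
  | zero => intro; simp
  | succ i ih =>
    intro hi
    have := h i hi
    have := ih (by omega)
    rw [add_mul, one_mul]
    omega

section Infixes

variable {α : Type*} [DecidableEq α]

def infixFinset (w : List α) : Finset (List α) :=
  (Finset.range (w.length + 1) ×ˢ Finset.range (w.length + 1)).image fun p => (w.drop p.1).take p.2

theorem mem_infixFinset {u w : List α} (h : u <:+: w) : u ∈ infixFinset w := by
  obtain ⟨s, t, rfl⟩ := h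
  refine Finset.mem_image.2 ⟨(s.length, u.length), ?_, by simp⟩
  simp only [Finset.mem_product, Finset.mem_range, List.length_append]
  omega

theorem card_infixFinset_le (w : List α) : (infixFinset w).card ≤ (w.length + 1) ^ 2 :=
  Finset.card_image_le.trans (by simp [sq])

theorem card_biUnion_infixFinset_le {ι : Type*} {Y : Finset ι} {μ : ι → List α} {b : ℕ}
    (h : ∀ y ∈ Y, (μ y).length ≤ b) :
    (Y.biUnion fun y => infixFinset (μ y)).card ≤ Y.card * (b + 1) ^ 2 := by
  refine Finset.card_biUnion_le.trans ?_
  rw [← smul_eq_mul]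
  refine Finset.sum_le_card_nsmul _ _ _ fun y hy => (card_infixFinset_le _).trans ?_
  exact Nat.pow_le_pow_left (by have := h y hy; omega) 2

end Infixes

theorem succ_le_card_pow_of_pairwise_ne {α β : Type*} [DecidableEq α] {N : ℕ} {Y : Finset α}
    {C : Finset β} (f : ℕ → α → β) (hmem : ∀ i ≤ N, ∀ x ∈ Y, f i x ∈ C)
    (hne : ∀ i j, i < j → j ≤ N → ∃ x ∈ Y, f i x ≠ f j x) : N + 1 ≤ C.card ^ Y.card := by
  have hinj : Set.InjOn (fun i x (_ : x ∈ Y) => f i x) (Finset.range (N + 1)) := by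
    intro i hi j hj hij
    simp only [Finset.coe_range, Set.mem_Iio] at hi hj
    by_contra hne'
    rcases Nat.lt_or_gt_of_ne hne' with hlt | hlt
    · obtain ⟨x, hx, hfx⟩ := hne i j hlt (by omega)
      exact hfx (congrFun (congrFun hij x) hx)
    · obtain ⟨x, hx, hfx⟩ := hne j i hlt (by omega)
      exact hfx (congrFun (congrFun hij x) hx).symm
  calc N + 1 = (Finset.range (N + 1)).card := (Finset.card_range _).symm
    _ ≤ (Y.pi fun _ => C).card := Finset.card_le_card_of_injOn _
        (fun i hi => Finset.mem_pi.2 fun x hx => hmem i (by simpa [Nat.lt_succ_iff] using hi) x hx)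
        hinj
    _ = C.card ^ Y.card := by simp [Finset.card_pi]

def maxAnswer (φ : W → W) (q : List W) : ℕ := maxList (q.map fun v => (φ v).length)

theorem length_le_maxAnswer {φ : W → W} {q : List W} {v : W} (h : v ∈ q) :
    (φ v).length ≤ maxAnswer φ q :=
  maxList_le_iff.1 le_rfl _ (List.mem_map_of_mem h)

theorem maxAnswer_mono {φ : W → W} {q q' : List W} (h : q ⊆ q') :
    maxAnswer φ q ≤ maxAnswer φ q' :=
  maxList_le_iff.2 fun _ ha => by
    obtain ⟨v, hv, rfl⟩ := List.mem_map.1 ha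
    exact length_le_maxAnswer (h hv)

@[simp]
theorem maxAnswer_append (φ : W → W) (q q' : List W) :
    maxAnswer φ (q ++ q') = max (maxAnswer φ q) (maxAnswer φ q') := by
  simp [maxAnswer, maxList_append]

def tierSize (Γ : ℕ → ℕ) (s : ℕ) (X : Finset ℕ) (μ : ℕ → W) : ℕ :=
  (X.filter fun x => s ≤ Γ x).sup fun x => (μ x).length

section TierSize

variable {Γ : ℕ → ℕ} {s : ℕ} {X : Finset ℕ} {μ : ℕ → W}

theorem tierSize_le_iff {b : ℕ} :
    tierSize Γ s X μ ≤ b ↔ ∀ x ∈ X, s ≤ Γ x → (μ x).length ≤ b := by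
  simp [tierSize]

theorem length_le_tierSize {x : ℕ} (hx : x ∈ X) (hs : s ≤ Γ x) :
    (μ x).length ≤ tierSize Γ s X μ :=
  tierSize_le_iff.1 le_rfl x hx hs

theorem tierSize_mono {s' : ℕ} {Y : Finset ℕ} (hs : s ≤ s') (hXY : X ⊆ Y) :
    tierSize Γ s' X μ ≤ tierSize Γ s Y μ :=
  tierSize_le_iff.2 fun _ hx hx' => length_le_tierSize (hXY hx) (hs.trans hx')

theorem tierSize_update_le {x : ℕ} {v : W} :
    tierSize Γ s X (Function.update μ x v) ≤
      max (tierSize Γ s X μ) (if s ≤ Γ x then v.length else 0) := by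
  refine tierSize_le_iff.2 fun y hy hs => ?_
  by_cases hxy : y = x
  · subst hxy; simp [hs]
  · rw [Function.update_of_ne hxy]
    exact le_max_of_le_left (length_le_tierSize hy hs)

end TierSize

noncomputable def shortWords (B : ℕ) : Finset W := (List.finite_length_le Bool B).toFinset

theorem mem_shortWords {B : ℕ} {w : W} : w ∈ shortWords B ↔ w.length ≤ B := by
  simp [shortWords]

section Noninterference

variable {Γ : ℕ → ℕ} {Δ : OpEnv S}

theorem storeEquiv.mono {t t' : ℕ} {μ₁ μ₂ : ℕ → W} (he : storeEquiv Γ t μ₁ μ₂) (h : t ≤ t') :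
    storeEquiv Γ t' μ₁ μ₂ :=
  fun x hx => he x (h.trans hx)

theorem TE.evalE_eq (hS : SafeDelta S Δ) {e : Expr S} {t tin tout : ℕ}
    (h : TE S Γ Δ e t tin tout) {φ : W → W} {μ₁ μ₂ : ℕ → W} (he : storeEquiv Γ t μ₁ μ₂) :
    evalE S φ μ₁ e = evalE S φ μ₂ e := by
  induction h with
  | var => exact he _ le_rfl
  | op hmem _ ih =>
    exact congrArg (S.sem _) (funext fun i => ih i (he.mono ((hS _ _ _ _ hmem).2.1 i)))
  | orac _ _ _ hle ih₁ ih₂ =>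
    simp only [evalE, ih₁ he, ih₂ (he.mono hle)]

theorem EvalC.eq_of_not_mem {φ : W → W} {c : Cmd S} {μ μ' : ℕ → W} {n : ℕ} {q : List W}
    (h : EvalC S φ c μ μ' n q) {x : ℕ} (hx : x ∉ varsC c) : μ' x = μ x := by
  induction h with
  | assign => exact Function.update_of_ne (by simp_all [varsC]) _ _
  | seq _ _ ih₁ ih₂ => simp_all [varsC]
  | ifT _ _ ih => simp_all [varsC]
  | ifF _ _ ih => simp_all [varsC]
  | whT _ _ _ ih₁ ih₂ => simp_all [varsC]
  | _ => rfl

theorem TC.assign_inv {x : ℕ} {e : Expr S} {t tin tout : ℕ}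
    (h : TC S Γ Δ (.assign x e) t tin tout) :
    ∃ te, TE S Γ Δ e te tin tout ∧ Γ x ≤ te ∧ Γ x ≤ t := by
  generalize hc : Cmd.assign x e = c at h
  induction h with
  | sub _ ih => obtain ⟨te, h₁, h₂, h₃⟩ := ih hc; exact ⟨te, h₁, h₂, by omega⟩
  | assign h₁ h₂ => cases hc; exact ⟨_, h₁, h₂, le_rfl⟩
  | _ => cases hc

theorem TC.seq_inv {c₁ c₂ : Cmd S} {t tin tout : ℕ} (h : TC S Γ Δ (.seq c₁ c₂) t tin tout) :
    ∃ t' ≤ t, TC S Γ Δ c₁ t' tin tout ∧ TC S Γ Δ c₂ t' tin tout := by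
  generalize hc : Cmd.seq c₁ c₂ = c at h
  induction h with
  | sub _ ih => obtain ⟨t', h₁, h₂⟩ := ih hc; exact ⟨t', by omega, h₂⟩
  | seq h₁ h₂ => cases hc; exact ⟨_, le_rfl, h₁, h₂⟩
  | _ => cases hc

theorem TC.ite_inv {e : Expr S} {c₁ c₂ : Cmd S} {t tin tout : ℕ}
    (h : TC S Γ Δ (.ite e c₁ c₂) t tin tout) :
    ∃ t' ≤ t, TE S Γ Δ e t' tin tout ∧ TC S Γ Δ c₁ t' tin tout ∧ TC S Γ Δ c₂ t' tin tout := by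
  generalize hc : Cmd.ite e c₁ c₂ = c at h
  induction h with
  | sub _ ih => obtain ⟨t', h₁, h₂⟩ := ih hc; exact ⟨t', by omega, h₂⟩
  | ite h₁ h₂ h₃ => cases hc; exact ⟨_, le_rfl, h₁, h₂, h₃⟩
  | _ => cases hc

theorem TC.wh_inv {e : Expr S} {c : Cmd S} {t tin tout : ℕ}
    (h : TC S Γ Δ (.wh e c) t tin tout) :
    ∃ t' ≤ t, ∃ tout', 1 ≤ t' ∧ TE S Γ Δ e t' tin tout' ∧ TC S Γ Δ c t' t' tout' ∧
      TC S Γ Δ (.wh e c) t' tin tout := by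
  generalize hc : Cmd.wh e c = c' at h
  induction h with
  | sub _ ih => obtain ⟨t', h₁, h₂⟩ := ih hc; exact ⟨t', by omega, h₂⟩
  | whW h₁ h₂ h₃ h₄ => cases hc; exact ⟨_, le_rfl, _, h₃, h₁, h₂, .whW h₁ h₂ h₃ h₄⟩
  | wh0 h₁ h₂ h₃ => cases hc; exact ⟨_, le_rfl, _, h₃, h₁, h₂, .wh0 h₁ h₂ h₃⟩
  | _ => cases hc

theorem EvalC.eq_of_lt_tier {φ : W → W} {c : Cmd S} {μ μ' : ℕ → W} {n : ℕ} {q : List W}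
    (h : EvalC S φ c μ μ' n q) {t tin tout : ℕ} (ht : TC S Γ Δ c t tin tout) {x : ℕ}
    (hx : t < Γ x) : μ' x = μ x := by
  induction h generalizing t tin tout with
  | skip | whF => rfl
  | assign =>
    obtain ⟨_, _, _, h⟩ := ht.assign_inv
    exact Function.update_of_ne (by rintro rfl; omega) _ _
  | seq _ _ ih₁ ih₂ =>
    obtain ⟨t', ht', h₁, h₂⟩ := ht.seq_inv
    rw [ih₂ h₂ (by omega), ih₁ h₁ (by omega)]
  | ifT _ _ ih =>
    obtain ⟨t', ht', -, h₁, -⟩ := ht.ite_inv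
    exact ih h₁ (by omega)
  | ifF _ _ ih =>
    obtain ⟨t', ht', -, -, h₂⟩ := ht.ite_inv
    exact ih h₂ (by omega)
  | whT _ _ _ ih₁ ih₂ =>
    obtain ⟨t', ht', _, -, -, hc, hw⟩ := ht.wh_inv
    rw [ih₂ hw (by omega), ih₁ hc (by omega)]

theorem storeEquiv_of_lt_tier {φ : W → W} {c : Cmd S} {t tin tout s : ℕ}
    (ht : TC S Γ Δ c t tin tout) (hts : t < s) {μa μa' μb μb' : ℕ → W} {na nb : ℕ}
    {qa qb : List W} (ha : EvalC S φ c μa μa' na qa) (hb : EvalC S φ c μb μb' nb qb)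
    (he : storeEquiv Γ s μa μb) : storeEquiv Γ s μa' μb' := fun x hx => by
  rw [ha.eq_of_lt_tier ht (by omega), hb.eq_of_lt_tier ht (by omega)]
  exact he x hx

theorem EvalC.storeEquiv (hS : SafeDelta S Δ) {φ : W → W} {c : Cmd S} {μa μa' : ℕ → W} {na : ℕ}
    {qa : List W} (ha : EvalC S φ c μa μa' na qa) {t tin tout s : ℕ}
    (ht : TC S Γ Δ c t tin tout) {μb μb' : ℕ → W} {nb : ℕ} {qb : List W}
    (hb : EvalC S φ c μb μb' nb qb) (he : storeEquiv Γ s μa μb) : storeEquiv Γ s μa' μb' := by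
  induction ha generalizing t tin tout μb μb' nb qb with
  | skip => cases hb; exact he
  | @assign _ x e =>
    cases hb
    obtain ⟨te, hte, hxe, -⟩ := ht.assign_inv
    intro z hz
    by_cases hzx : z = x
    · subst hzx
      simp only [Function.update_self, hte.evalE_eq hS (he.mono (by omega))]
    · simp only [Function.update_of_ne hzx, he z hz]
  | seq _ _ ih₁ ih₂ =>
    cases hb with
    | seq hb₁ hb₂ =>
      obtain ⟨t', -, h₁, h₂⟩ := ht.seq_inv
      exact ih₂ h₂ hb₂ (ih₁ h₁ hb₁ he)
  | ifT hg hab ih =>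
    obtain ⟨t', -, hte, h₁, h₂⟩ := ht.ite_inv
    rcases lt_or_ge t' s with hts | hts
    · exact storeEquiv_of_lt_tier (.ite hte h₁ h₂) hts (.ifT hg hab) hb he
    · cases hb with
      | ifT _ hb => exact ih h₁ hb he
      | ifF hg' _ => simp [hte.evalE_eq hS (he.mono hts), hg'] at hg
  | ifF hg hab ih =>
    obtain ⟨t', -, hte, h₁, h₂⟩ := ht.ite_inv
    rcases lt_or_ge t' s with hts | hts
    · exact storeEquiv_of_lt_tier (.ite hte h₁ h₂) hts (.ifF hg hab) hb he
    · cases hb with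
      | ifF _ hb => exact ih h₂ hb he
      | ifT hg' _ => simp [hte.evalE_eq hS (he.mono hts), hg'] at hg
  | whF hg =>
    obtain ⟨t', -, _, -, hte, -, hw⟩ := ht.wh_inv
    rcases lt_or_ge t' s with hts | hts
    · exact storeEquiv_of_lt_tier hw hts (.whF hg) hb he
    · cases hb with
      | whF _ => exact he
      | whT hg' _ _ => simp [hte.evalE_eq hS (he.mono hts), hg'] at hg
  | whT hg hbody hrest ih₁ ih₂ =>
    obtain ⟨t', -, _, -, hte, hc, hw⟩ := ht.wh_inv
    rcases lt_or_ge t' s with hts | hts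
    · exact storeEquiv_of_lt_tier hw hts (.whT hg hbody hrest) hb he
    · cases hb with
      | whF hg' => simp [hte.evalE_eq hS (he.mono hts), hg'] at hg
      | whT _ hbody' hrest' => exact ih₂ hw hrest' (ih₁ hc hbody' he)

end Noninterference

section OperatorGrowth

variable {o : S.Op}

theorem Sig.Neutral.bounded_or_infix (h : S.Neutral o) :
    ∃ c, ∀ v, (S.sem o v).length ≤ c ∨ ∃ i, S.sem o v <:+: v i := by
  rcases h with h0 | hbool | hsub
  · refine ⟨(S.sem o fun _ => []).length, fun v => .inl (le_of_eq ?_)⟩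
    congr 3
    funext i
    exact absurd i.2 (by omega)
  · exact ⟨1, fun v => .inl (by rcases hbool v with h | h <;> simp [h])⟩
  · exact ⟨0, fun v => .inr (hsub v)⟩

theorem Sig.Neutral.positive (h : S.Neutral o) : S.Positive o := by
  obtain ⟨c, hc⟩ := h.bounded_or_infix
  refine ⟨c, fun v => ?_⟩
  rcases hc v with h | ⟨i, hi⟩
  · omega
  · exact le_add_right (hi.length_le.trans (Finset.le_sup (f := fun i => (v i).length)
      (Finset.mem_univ i)))

variable {Δ : OpEnv S} {tin t : ℕ} {tv : Fin (S.ar o) → ℕ}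

theorem SafeDelta.positive (hS : SafeDelta S Δ) (hmem : (tv, t) ∈ Δ o tin) : S.Positive o := by
  rcases Nat.eq_zero_or_pos (S.ar o) with h0 | hpos
  · exact Sig.Neutral.positive (.inl h0)
  · exact ((hS o tin tv t hmem).1 hpos).1.elim Sig.Neutral.positive id

theorem SafeDelta.neutral (hS : SafeDelta S Δ) (hmem : (tv, t) ∈ Δ o tin) (ht : tin ≤ t) :
    S.Neutral o := by
  rcases Nat.eq_zero_or_pos (S.ar o) with h0 | hpos
  · exact .inl h0
  · obtain ⟨hop, -, -, -, hlt⟩ := hS o tin tv t hmem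
    by_contra hn
    exact absurd (hlt ⟨(hop hpos).1.resolve_left hn, hn⟩) (by omega)

end OperatorGrowth

theorem varsE_subset_op {o : S.Op} (a : Fin (S.ar o) → Expr S) (i : Fin (S.ar o)) :
    varsE (a i) ⊆ varsE (.op o a) :=
  fun _ hy => Finset.mem_biUnion.2 ⟨i, Finset.mem_univ i, hy⟩

theorem queriesE_subset_op (φ : W → W) (μ : ℕ → W) {o : S.Op} (a : Fin (S.ar o) → Expr S)
    (i : Fin (S.ar o)) : queriesE S φ μ (a i) ⊆ queriesE S φ μ (.op o a) :=
  fun _ hv => List.mem_flatten.2 ⟨_, List.mem_ofFn.2 ⟨i, rfl⟩, hv⟩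

section ExpressionValues

variable {Γ : ℕ → ℕ} {Δ : OpEnv S}

theorem TE.evalE_short_or_infix (hS : SafeDelta S Δ) {e : Expr S} {t tin tout : ℕ}
    (h : TE S Γ Δ e t tin tout) (ht : tin ≤ t) :
    ∃ K, ∀ φ μ, (evalE S φ μ e).length ≤ K ∨
      ∃ y ∈ varsE e, t ≤ Γ y ∧ evalE S φ μ e <:+: μ y := by
  induction h with
  | @var x =>
    exact ⟨0, fun _ _ => .inr ⟨x, by simp [varsE], le_rfl, List.infix_refl _⟩⟩
  | @op o a tv t tin tout hmem _ ih =>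
    obtain ⟨c, hc⟩ := (hS.neutral hmem ht).bounded_or_infix
    have hle := (hS o tin tv t hmem).2.1
    choose K hK using fun i => ih i (ht.trans (hle i))
    refine ⟨c + Finset.univ.sup K, fun φ μ => ?_⟩
    rcases hc fun i => evalE S φ μ (a i) with hsem | ⟨i, hi⟩
    · exact .inl (le_add_right hsem)
    rcases hK i φ μ with hKi | ⟨y, hy, hty, hinf⟩
    · exact .inl (hi.length_le.trans (hKi.trans
        (le_add_left (Finset.le_sup (Finset.mem_univ i)))))
    · exact .inr ⟨y, varsE_subset_op a i hy, (hle i).trans hty, hi.trans hinf⟩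
  | orac _ _ hlt => omega

theorem TE.length_evalE_le (hS : SafeDelta S Δ) {e : Expr S} {t tin tout : ℕ}
    (h : TE S Γ Δ e t tin tout) :
    ∃ K, ∀ s ≤ t, ∀ φ μ, (evalE S φ μ e).length ≤
      max (tierSize Γ s (varsE e) μ) (maxAnswer φ (queriesE S φ μ e)) + K := by
  induction h with
  | @var x =>
    exact ⟨0, fun s hs φ μ => le_max_of_le_left (length_le_tierSize (by simp [varsE]) hs)⟩
  | @op o a tv t tin tout hmem _ ih =>
    obtain ⟨c, hc⟩ := hS.positive hmem
    have hle := (hS o tin tv t hmem).2.1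
    choose K hK using ih
    refine ⟨Finset.univ.sup K + c, fun s hs φ μ => ?_⟩
    have hargs : (Finset.univ.sup fun i => (evalE S φ μ (a i)).length) ≤
        max (tierSize Γ s (varsE (.op o a)) μ) (maxAnswer φ (queriesE S φ μ (.op o a))) +
          Finset.univ.sup K :=
      Finset.sup_le fun i _ => (hK i s (hs.trans (hle i)) φ μ).trans (add_le_add
        (max_le_max (tierSize_mono le_rfl (varsE_subset_op a i))
          (maxAnswer_mono (queriesE_subset_op φ μ a i)))
        (Finset.le_sup (Finset.mem_univ i)))
    exact (hc _).trans (by omega)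
  | @orac e₁ e₂ =>
    refine ⟨0, fun s _ φ μ => le_max_of_le_right (length_le_maxAnswer ?_)⟩
    simp [queriesE]

end ExpressionValues

section Invariants

variable (Γ : ℕ → ℕ)

/-- Tier-0 variables are left out of the measure: they may grow along a loop, but no loop
guard depends on them. -/
def StepBoundBy (c : Cmd S) (P : Polynomial ℕ) : Prop :=
  ∀ ⦃φ μ μ' n q⦄, EvalC S φ c μ μ' n q → ∀ ⦃X : Finset ℕ⦄, varsC c ⊆ X →
    ∀ ⦃A⦄, maxAnswer φ q ≤ A → n ≤ P.eval (max (tierSize Γ 1 X μ) A)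

def HighTierShortOrInfix (c : Cmd S) (τ B : ℕ) : Prop :=
  ∀ ⦃φ μ μ' n q⦄, EvalC S φ c μ μ' n q → ∀ x, τ ≤ Γ x →
    (μ' x).length ≤ B ∨ μ' x = μ x ∨ ∃ y ∈ varsC c, Γ x ≤ Γ y ∧ μ' x <:+: μ y

def GrowthBoundBy (c : Cmd S) (P : Polynomial ℕ) : Prop :=
  ∀ ⦃φ μ μ' n q⦄, EvalC S φ c μ μ' n q → ∀ ⦃X : Finset ℕ⦄, varsC c ⊆ X →
    ∀ ⦃A⦄, maxAnswer φ q ≤ A → ∀ s,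
      tierSize Γ s X μ' ≤ max (tierSize Γ s X μ) A + P.eval (max (tierSize Γ (s + 1) X μ) A)

structure TierInvariants (c : Cmd S) (τ : ℕ) : Prop where
  stepBound : ∃ P, StepBoundBy Γ c P
  highTier : ∃ B, HighTierShortOrInfix Γ c τ B
  growthBound : ∃ P, GrowthBoundBy Γ c P

variable {Γ}

theorem TierInvariants.mono {c : Cmd S} {τ τ' : ℕ} (h : TierInvariants Γ c τ) (hτ : τ ≤ τ') :
    TierInvariants Γ c τ' := by
  obtain ⟨hP, ⟨B, hB⟩, hG⟩ := h
  exact ⟨hP, ⟨B, fun _ _ _ _ _ h x hx => hB h x (hτ.trans hx)⟩, hG⟩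

theorem tierInvariants_skip : TierInvariants Γ (.skip : Cmd S) 0 := by
  refine ⟨⟨1, ?_⟩, ⟨0, ?_⟩, ⟨0, ?_⟩⟩ <;> intro φ μ μ' n q h <;> cases h <;> simp

variable {Δ : OpEnv S}

theorem tierInvariants_assign (hS : SafeDelta S Δ) {x : ℕ} {e : Expr S} {te tin tout : ℕ}
    (he : TE S Γ Δ e te tin tout) (hxe : Γ x ≤ te) :
    TierInvariants Γ (.assign x e) (max tin (Γ x)) := by
  obtain ⟨K, hK⟩ := he.length_evalE_le hS
  refine ⟨⟨.C (sizeE e + 1), fun _ _ _ _ _ h => by cases h; simp⟩, ?_, ⟨.C K, ?_⟩⟩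
  · by_cases htin : tin ≤ te
    · obtain ⟨B, hB⟩ := he.evalE_short_or_infix hS htin
      refine ⟨B, fun φ μ _ _ _ h z _ => ?_⟩
      cases h
      by_cases hzx : z = x
      · subst hzx
        rcases hB φ μ with h | ⟨y, hy, hty, hinf⟩
        · exact .inl (by simpa using h)
        · exact .inr (.inr ⟨y, by simp [varsC, hy], hxe.trans hty, by simpa using hinf⟩)
      · exact .inr (.inl (Function.update_of_ne hzx _ _))
    · refine ⟨0, fun φ μ _ _ _ h z hz => ?_⟩
      cases h
      exact .inr (.inl (Function.update_of_ne (by rintro rfl; omega) _ _))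
  · intro φ μ _ _ _ h X hX A hA s
    cases h
    refine tierSize_update_le.trans (max_le (le_add_right (le_max_left _ _)) ?_)
    split_ifs with hs
    · have hv := hK s (hs.trans hxe) φ μ
      have hvars : tierSize Γ s (varsE e) μ ≤ tierSize Γ s X μ :=
        tierSize_mono le_rfl ((Finset.subset_insert _ _).trans hX)
      simp only [Polynomial.eval_C]
      omega
    · exact Nat.zero_le _

end Invariants

section Composition

variable {Γ : ℕ → ℕ} {c₁ c₂ : Cmd S}

theorem tierSize_max_succ_le {s : ℕ} {X : Finset ℕ} {μ : ℕ → W} {A : ℕ} :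
    max (tierSize Γ (s + 1) X μ) A ≤ max (tierSize Γ s X μ) A :=
  max_le_max (tierSize_mono (Nat.le_succ s) subset_rfl) le_rfl

theorem GrowthBoundBy.seq {G₁ G₂ : Polynomial ℕ} (h₁ : GrowthBoundBy Γ c₁ G₁)
    (h₂ : GrowthBoundBy Γ c₂ G₂) :
    GrowthBoundBy Γ (.seq c₁ c₂) (G₁ + G₂.comp (.X + G₁)) := by
  intro φ μ μ' n q h X hX A hA s
  cases h with
  | @seq _ _ _ μ₁ _ _ _ q₁ q₂ hr₁ hr₂ =>
    simp only [varsC, Finset.union_subset_iff] at hX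
    simp only [maxAnswer_append, max_le_iff] at hA
    set m := max (tierSize Γ (s + 1) X μ) A
    have hs : tierSize Γ s X μ₁ ≤ max (tierSize Γ s X μ) A + G₁.eval m := h₁ hr₁ hX.1 hA.1 s
    have hs' : tierSize Γ (s + 1) X μ₁ ≤ m + G₁.eval m :=
      (h₁ hr₁ hX.1 hA.1 (s + 1)).trans
        (add_le_add le_rfl (G₁.monotone_eval_nat tierSize_max_succ_le))
    have hG₂ : G₂.eval (max (tierSize Γ (s + 1) X μ₁) A) ≤ G₂.eval (m + G₁.eval m) :=
      G₂.monotone_eval_nat (max_le hs' (by omega))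
    have := h₂ hr₂ hX.2 hA.2 s
    simp only [Polynomial.eval_add, Polynomial.eval_comp, Polynomial.eval_X]
    omega

theorem StepBoundBy.seq {P₁ P₂ G₁ : Polynomial ℕ} (h₁ : StepBoundBy Γ c₁ P₁)
    (hG₁ : GrowthBoundBy Γ c₁ G₁) (h₂ : StepBoundBy Γ c₂ P₂) :
    StepBoundBy Γ (.seq c₁ c₂) (P₁ + P₂.comp (.X + G₁) + 1) := by
  intro φ μ μ' n q h X hX A hA
  cases h with
  | @seq _ _ _ μ₁ _ n₁ n₂ q₁ q₂ hr₁ hr₂ =>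
    simp only [varsC, Finset.union_subset_iff] at hX
    simp only [maxAnswer_append, max_le_iff] at hA
    set M := max (tierSize Γ 1 X μ) A
    have hμ₁ : tierSize Γ 1 X μ₁ ≤ M + G₁.eval M :=
      (hG₁ hr₁ hX.1 hA.1 1).trans (add_le_add le_rfl (G₁.monotone_eval_nat tierSize_max_succ_le))
    have hn₁ : n₁ ≤ P₁.eval M := h₁ hr₁ hX.1 hA.1
    have hn₂ : n₂ ≤ P₂.eval (M + G₁.eval M) :=
      (h₂ hr₂ hX.2 hA.2).trans (P₂.monotone_eval_nat (max_le hμ₁ (by omega)))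
    simp only [Polynomial.eval_add, Polynomial.eval_comp, Polynomial.eval_X, Polynomial.eval_one]
    omega

theorem HighTierShortOrInfix.seq {τ B₁ B₂ : ℕ} (h₁ : HighTierShortOrInfix Γ c₁ τ B₁)
    (h₂ : HighTierShortOrInfix Γ c₂ τ B₂) :
    HighTierShortOrInfix Γ (.seq c₁ c₂) τ (max B₁ B₂) := by
  intro φ μ μ' n q h x hx
  have hsub₁ : varsC c₁ ⊆ varsC (.seq c₁ c₂) := Finset.subset_union_left
  have hsub₂ : varsC c₂ ⊆ varsC (.seq c₁ c₂) := Finset.subset_union_right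
  cases h with
  | seq hr₁ hr₂ =>
    rcases h₂ hr₂ x hx with h | h | ⟨y, hy, hxy, hinf⟩
    · exact .inl (le_max_of_le_right h)
    · rw [h]
      rcases h₁ hr₁ x hx with h | h | ⟨y, hy, hxy, hinf⟩
      · exact .inl (le_max_of_le_left h)
      · exact .inr (.inl h)
      · exact .inr (.inr ⟨y, hsub₁ hy, hxy, hinf⟩)
    · rcases h₁ hr₁ y (hx.trans hxy) with h | h | ⟨y', hy', hyy', hinf'⟩
      · exact .inl (le_max_of_le_left (hinf.length_le.trans h))
      · exact .inr (.inr ⟨y, hsub₂ hy, hxy, h ▸ hinf⟩)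
      · exact .inr (.inr ⟨y', hsub₁ hy', hxy.trans hyy', hinf.trans hinf'⟩)

variable {e : Expr S}

theorem GrowthBoundBy.ite {G₁ G₂ : Polynomial ℕ} (h₁ : GrowthBoundBy Γ c₁ G₁)
    (h₂ : GrowthBoundBy Γ c₂ G₂) : GrowthBoundBy Γ (.ite e c₁ c₂) (G₁ + G₂) := by
  intro φ μ μ' n q h X hX A hA s
  simp only [varsC, Finset.union_subset_iff] at hX
  simp only [Polynomial.eval_add]
  cases h with
  | ifT _ hr =>
    simp only [maxAnswer_append, max_le_iff] at hA
    exact (h₁ hr hX.1.2 hA.2 s).trans (by omega)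
  | ifF _ hr =>
    simp only [maxAnswer_append, max_le_iff] at hA
    exact (h₂ hr hX.2 hA.2 s).trans (by omega)

theorem StepBoundBy.ite {P₁ P₂ : Polynomial ℕ} (h₁ : StepBoundBy Γ c₁ P₁)
    (h₂ : StepBoundBy Γ c₂ P₂) : StepBoundBy Γ (.ite e c₁ c₂) (P₁ + P₂ + .C (sizeE e + 1)) := by
  intro φ μ μ' n q h X hX A hA
  simp only [varsC, Finset.union_subset_iff] at hX
  simp only [Polynomial.eval_add, Polynomial.eval_C]
  cases h with
  | ifT _ hr =>
    simp only [maxAnswer_append, max_le_iff] at hA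
    have := h₁ hr hX.1.2 hA.2
    omega
  | ifF _ hr =>
    simp only [maxAnswer_append, max_le_iff] at hA
    have := h₂ hr hX.2 hA.2
    omega

theorem HighTierShortOrInfix.ite {τ B₁ B₂ : ℕ} (h₁ : HighTierShortOrInfix Γ c₁ τ B₁)
    (h₂ : HighTierShortOrInfix Γ c₂ τ B₂) :
    HighTierShortOrInfix Γ (.ite e c₁ c₂) τ (max B₁ B₂) := by
  intro φ μ μ' n q h x hx
  cases h with
  | ifT _ hr =>
    rcases h₁ hr x hx with h | h | ⟨y, hy, hxy, hinf⟩
    · exact .inl (le_max_of_le_left h)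
    · exact .inr (.inl h)
    · exact .inr (.inr ⟨y, by simp [varsC, hy], hxy, hinf⟩)
  | ifF _ hr =>
    rcases h₂ hr x hx with h | h | ⟨y, hy, hxy, hinf⟩
    · exact .inl (le_max_of_le_right h)
    · exact .inr (.inl h)
    · exact .inr (.inr ⟨y, by simp [varsC, hy], hxy, hinf⟩)

end Composition

/-- At `T`, a bound on the number of ways to fill the variables of `X` with words of length at
most `B` or infixes of words of length at most `T`. -/
noncomputable def loopIterBound (B : ℕ) (X : Finset ℕ) : Polynomial ℕ :=
  (.C (shortWords B).card + .C X.card * (.X + 1) ^ 2) ^ X.card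

/-- `loopGrowth B N G d` bounds the growth of the tier-`s` part of the store over a loop whose
guard has tier at most `s + d`: each level feeds the bound of the level above into the body's
growth bound `G`, once per iteration, and `N` bounds the number of iterations. -/
noncomputable def loopGrowth (B : ℕ) (N G : Polynomial ℕ) : ℕ → Polynomial ℕ
  | 0 => .C B
  | d + 1 => loopGrowth B N G d + N * G.comp (.X + loopGrowth B N G d)

theorem loopGrowth_eval_le_succ (B : ℕ) (N G : Polynomial ℕ) (d m : ℕ) :
    (loopGrowth B N G d).eval m ≤ (loopGrowth B N G (d + 1)).eval m := by
  simp [loopGrowth]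

structure LoopRun (S : Sig) (φ : W → W) (e : Expr S) (c : Cmd S) where
  len : ℕ
  store : ℕ → ℕ → W
  size : ℕ → ℕ
  queries : ℕ → List W
  guard_true : ∀ i < len, evalE S φ (store i) e = [true]
  body : ∀ i < len, EvalC S φ c (store i) (store (i + 1)) (size i) (queries i)
  guard_false : evalE S φ (store len) e = [false]

namespace LoopRun

variable {φ : W → W} {e : Expr S} {c : Cmd S}

def cons (R : LoopRun S φ e c) {μ : ℕ → W} (hg : evalE S φ μ e = [true]) {n : ℕ} {q : List W}
    (hbody : EvalC S φ c μ (R.store 0) n q) : LoopRun S φ e c where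
  len := R.len + 1
  store | 0 => μ | i + 1 => R.store i
  size | 0 => n | i + 1 => R.size i
  queries | 0 => q | i + 1 => R.queries i
  guard_true | 0, _ => hg | i + 1, hi => R.guard_true i (by omega)
  body | 0, _ => hbody | i + 1, hi => R.body i (by omega)
  guard_false := R.guard_false

variable (R : LoopRun S φ e c) {Γ : ℕ → ℕ}

theorem store_eq_of_not_mem {x : ℕ} (hx : x ∉ varsC c) :
    ∀ i ≤ R.len, R.store i x = R.store 0 x := by
  intro i
  induction i with
  | zero => intro; rfl
  | succ i ih => intro hi; rw [(R.body i hi).eq_of_not_mem hx, ih (by omega)]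

theorem highTier {τ B : ℕ} (hB : HighTierShortOrInfix Γ c τ B) :
    ∀ i ≤ R.len, ∀ x, τ ≤ Γ x → (R.store i x).length ≤ B ∨ R.store i x = R.store 0 x ∨
      ∃ y ∈ varsC c, Γ x ≤ Γ y ∧ R.store i x <:+: R.store 0 y := by
  intro i
  induction i with
  | zero => exact fun _ _ _ => .inr (.inl rfl)
  | succ i ih =>
    intro hi x hx
    rcases hB (R.body i hi) x hx with h | h | ⟨y, hy, hxy, hinf⟩
    · exact .inl h
    · rw [h]; exact ih (by omega) x hx
    · rcases ih (by omega) y (hx.trans hxy) with h | h | ⟨y', hy', hyy', hinf'⟩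
      · exact .inl (hinf.length_le.trans h)
      · exact .inr (.inr ⟨y, hy, hxy, h ▸ hinf⟩)
      · exact .inr (.inr ⟨y', hy', hxy.trans hyy', hinf.trans hinf'⟩)

variable {Δ : OpEnv S} {te tin tout tout' : ℕ}

/-- By noninterference, a repetition of the tier-`te` part of the store would make the loop
run forever. -/
theorem not_storeEquiv (hS : SafeDelta S Δ) (he : TE S Γ Δ e te tin tout)
    (hc : TC S Γ Δ c te te tout') {i j : ℕ} (hij : i < j) (hj : j ≤ R.len) :
    ¬ storeEquiv Γ te (R.store i) (R.store j) := by
  intro hequiv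
  have hshift : ∀ k, j + k ≤ R.len → storeEquiv Γ te (R.store (i + k)) (R.store (j + k)) := by
    intro k
    induction k with
    | zero => exact fun _ => hequiv
    | succ k ih =>
      intro hk
      exact (R.body (i + k) (by omega)).storeEquiv hS hc (R.body (j + k) (by omega)) (ih (by omega))
  have hguard := he.evalE_eq hS (φ := φ) (hshift (R.len - j) (by omega))
  rw [show j + (R.len - j) = R.len by omega, R.guard_false,
    R.guard_true _ (by omega)] at hguard
  simp at hguard

theorem len_le (hS : SafeDelta S Δ) (he : TE S Γ Δ e te tin tout) (hc : TC S Γ Δ c te te tout')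
    {B : ℕ} (hB : HighTierShortOrInfix Γ c te B) {X : Finset ℕ} (hX : varsC c ⊆ X) :
    R.len ≤ (loopIterBound B X).eval (tierSize Γ te X (R.store 0)) := by
  set Xh := X.filter fun x => te ≤ Γ x
  set T := tierSize Γ te X (R.store 0)
  have hmem : ∀ i ≤ R.len, ∀ x ∈ Xh,
      R.store i x ∈ shortWords B ∪ Xh.biUnion fun y => infixFinset (R.store 0 y) := by
    intro i hi x hx
    obtain ⟨hxX, hxt⟩ := Finset.mem_filter.1 hx
    rcases R.highTier hB i hi x hxt with h | h | ⟨y, hy, hxy, hinf⟩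
    · exact Finset.mem_union_left _ (mem_shortWords.2 h)
    · exact Finset.mem_union_right _ (Finset.mem_biUnion.2
        ⟨x, hx, mem_infixFinset (h ▸ List.infix_refl _)⟩)
    · exact Finset.mem_union_right _ (Finset.mem_biUnion.2
        ⟨y, Finset.mem_filter.2 ⟨hX hy, hxt.trans hxy⟩, mem_infixFinset hinf⟩)
  have hne : ∀ i j, i < j → j ≤ R.len → ∃ x ∈ Xh, R.store i x ≠ R.store j x := by
    intro i j hij hj
    by_contra! hagree
    refine R.not_storeEquiv hS he hc hij hj fun z hz => ?_
    by_cases hzX : z ∈ X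
    · exact hagree z (Finset.mem_filter.2 ⟨hzX, hz⟩)
    · rw [R.store_eq_of_not_mem (fun h => hzX (hX h)) i (by omega),
        R.store_eq_of_not_mem (fun h => hzX (hX h)) j hj]
  have hcard : R.len + 1 ≤ ((shortWords B).card + Xh.card * (T + 1) ^ 2) ^ Xh.card :=
    (succ_le_card_pow_of_pairwise_ne R.store hmem hne).trans
    (Nat.pow_le_pow_left ((Finset.card_union_le _ _).trans (add_le_add le_rfl
      (card_biUnion_infixFinset_le (b := T) fun y hy =>
        length_le_tierSize (Finset.mem_filter.1 hy).1 (Finset.mem_filter.1 hy).2))) _)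
  have hbase : 1 ≤ (shortWords B).card + Xh.card * (T + 1) ^ 2 :=
    le_add_right (Finset.card_pos.2 ⟨[], mem_shortWords.2 (Nat.zero_le B)⟩)
  calc R.len ≤ ((shortWords B).card + Xh.card * (T + 1) ^ 2) ^ Xh.card := by omega
    _ ≤ ((shortWords B).card + X.card * (T + 1) ^ 2) ^ X.card :=
      (Nat.pow_le_pow_right hbase (Finset.card_filter_le _ _)).trans
        (Nat.pow_le_pow_left (add_le_add le_rfl
          (Nat.mul_le_mul_right _ (Finset.card_filter_le _ _))) _)
    _ = (loopIterBound B X).eval T := by simp [loopIterBound]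

theorem len_le_of_subset (hS : SafeDelta S Δ) (he : TE S Γ Δ e te tin tout)
    (hc : TC S Γ Δ c te te tout') {B : ℕ} (hB : HighTierShortOrInfix Γ c te B) {X : Finset ℕ}
    (hX : varsC (.wh e c) ⊆ X) :
    R.len ≤ (loopIterBound B (varsC (.wh e c))).eval (tierSize Γ te X (R.store 0)) :=
  (R.len_le hS he hc hB Finset.subset_union_right).trans
    (Polynomial.monotone_eval_nat _ (tierSize_mono le_rfl hX))

variable {B A : ℕ} {N G : Polynomial ℕ} {X : Finset ℕ}

theorem tierSize_le_of_succ (hG : GrowthBoundBy Γ c G) (hX : varsC c ⊆ X)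
    (hA : ∀ i < R.len, maxAnswer φ (R.queries i) ≤ A) {s m b : ℕ}
    (hlen : R.len ≤ N.eval m) (hup : ∀ i ≤ R.len, max (tierSize Γ (s + 1) X (R.store i)) A ≤ b) :
    ∀ i ≤ R.len, tierSize Γ s X (R.store i) ≤
      max (tierSize Γ s X (R.store 0)) A + N.eval m * G.eval b := by
  have hstep : ∀ i < R.len, tierSize Γ s X (R.store (i + 1)) ≤
      max (tierSize Γ s X (R.store i)) A + G.eval b := fun i hi =>
    (hG (R.body i hi) hX (hA i hi) s).trans
      (add_le_add le_rfl (G.monotone_eval_nat (hup i hi.le)))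
  intro i hi
  exact (le_max_add_mul_of_succ_le (a := fun i => tierSize Γ s X (R.store i)) hstep i hi).trans
    (add_le_add le_rfl (Nat.mul_le_mul_right _ (hi.trans hlen)))

theorem tierSize_le (hB : HighTierShortOrInfix Γ c te B) (hG : GrowthBoundBy Γ c G)
    (hX : varsC c ⊆ X) (hA : ∀ i < R.len, maxAnswer φ (R.queries i) ≤ A)
    (hlen : R.len ≤ N.eval (tierSize Γ te X (R.store 0))) :
    ∀ d s, te ≤ s + d → ∀ i ≤ R.len, tierSize Γ s X (R.store i) ≤
      max (tierSize Γ s X (R.store 0)) A +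
        (loopGrowth B N G d).eval (max (tierSize Γ (s + 1) X (R.store 0)) A) := by
  intro d
  induction d with
  | zero =>
    intro s hs i hi
    refine tierSize_le_iff.2 fun x hx hsx => ?_
    have hμ : ∀ y ∈ X, Γ x ≤ Γ y → (R.store 0 y).length ≤ tierSize Γ s X (R.store 0) :=
      fun y hy hxy => length_le_tierSize hy (hsx.trans hxy)
    rcases R.highTier hB i hi x (by omega) with h | h | ⟨y, hy, hxy, hinf⟩
    · simp only [loopGrowth, Polynomial.eval_C]
      omega
    · rw [h]
      exact le_add_right (le_max_of_le_left (hμ x hx le_rfl))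
    · exact le_add_right (le_max_of_le_left (hinf.length_le.trans (hμ y (hX hy) hxy)))
  | succ d ih =>
    intro s hs i hi
    by_cases hsd : te ≤ s + d
    · exact (ih s hsd i hi).trans (add_le_add le_rfl (loopGrowth_eval_le_succ _ _ _ _ _))
    set m := max (tierSize Γ (s + 1) X (R.store 0)) A
    have hup : ∀ i ≤ R.len, max (tierSize Γ (s + 1) X (R.store i)) A ≤
        m + (loopGrowth B N G d).eval m := fun i hi =>
      max_le ((ih (s + 1) (by omega) i hi).trans (add_le_add le_rfl
        ((loopGrowth B N G d).monotone_eval_nat tierSize_max_succ_le))) (by omega)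
    have hlen' : R.len ≤ N.eval m :=
      hlen.trans (N.monotone_eval_nat (le_max_of_le_left (tierSize_mono (by omega) subset_rfl)))
    have := R.tierSize_le_of_succ hG hX hA hlen' hup i hi
    simp only [loopGrowth, Polynomial.eval_add, Polynomial.eval_mul, Polynomial.eval_comp,
      Polynomial.eval_X]
    omega

end LoopRun

theorem EvalC.exists_loopRun {φ : W → W} {e : Expr S} {c : Cmd S} {μ μ' : ℕ → W} {n : ℕ}
    {q : List W} (h : EvalC S φ (.wh e c) μ μ' n q) :
    ∃ R : LoopRun S φ e c, R.store 0 = μ ∧ R.store R.len = μ' ∧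
      (∀ i < R.len, R.queries i ⊆ q) ∧
      n = ∑ i ∈ Finset.range R.len, (sizeE e + R.size i + 1) + (sizeE e + 1) := by
  generalize hw : Cmd.wh e c = w at h
  induction h with
  | whF hg =>
    cases hw
    exact ⟨⟨0, fun _ => _, fun _ => 0, fun _ => [], nofun, nofun, hg⟩, rfl, rfl, nofun, by simp⟩
  | whT hg hbody _ _ ih =>
    cases hw
    obtain ⟨R, rfl, hlen, hq, hn⟩ := ih rfl
    refine ⟨R.cons hg hbody, rfl, hlen, fun i hi => ?_, ?_⟩
    · cases i with
      | zero => exact List.Subset.trans (List.subset_append_right _ _) (List.subset_append_left _ _)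
      | succ i =>
        exact List.Subset.trans (hq i (by simp [LoopRun.cons] at hi; omega))
          (List.subset_append_right _ _)
    · simp only [LoopRun.cons, Finset.sum_range_succ', hn]
      omega
  | _ => cases hw

section Loop

variable {Γ : ℕ → ℕ} {Δ : OpEnv S} {e : Expr S} {c : Cmd S} {te tin tout tout' B : ℕ}
  {P G : Polynomial ℕ}

theorem HighTierShortOrInfix.wh {τ : ℕ} (hB : HighTierShortOrInfix Γ c τ B) :
    HighTierShortOrInfix Γ (.wh e c) τ B := by
  intro φ μ μ' n q h x hx
  obtain ⟨R, rfl, rfl, -, -⟩ := h.exists_loopRun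
  rcases R.highTier hB R.len le_rfl x hx with h | h | ⟨y, hy, hxy, hinf⟩
  · exact .inl h
  · exact .inr (.inl h)
  · exact .inr (.inr ⟨y, Finset.subset_union_right hy, hxy, hinf⟩)

theorem GrowthBoundBy.wh (hS : SafeDelta S Δ) (he : TE S Γ Δ e te tin tout)
    (hc : TC S Γ Δ c te te tout') (hB : HighTierShortOrInfix Γ c te B)
    (hG : GrowthBoundBy Γ c G) :
    GrowthBoundBy Γ (.wh e c) (loopGrowth B (loopIterBound B (varsC (.wh e c))) G te) := by
  intro φ μ μ' n q h X hX A hA s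
  obtain ⟨R, rfl, rfl, hq, -⟩ := h.exists_loopRun
  exact R.tierSize_le hB hG (Finset.subset_union_right.trans hX)
    (fun i hi => (maxAnswer_mono (hq i hi)).trans hA) (R.len_le_of_subset hS he hc hB hX)
    te s (by omega) R.len le_rfl

theorem StepBoundBy.wh (hS : SafeDelta S Δ) (he : TE S Γ Δ e te tin tout)
    (hc : TC S Γ Δ c te te tout') (hte : 1 ≤ te) (hB : HighTierShortOrInfix Γ c te B)
    (hP : StepBoundBy Γ c P) (hG : GrowthBoundBy Γ c G) :
    StepBoundBy Γ (.wh e c) ((loopIterBound B (varsC (.wh e c)) + 1) * (.C (sizeE e + 1) +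
      P.comp (.X + loopGrowth B (loopIterBound B (varsC (.wh e c))) G te))) := by
  intro φ μ μ' n q h X hX A hA
  obtain ⟨R, rfl, rfl, hq, rfl⟩ := h.exists_loopRun
  set N := loopIterBound B (varsC (.wh e c))
  set F := loopGrowth B N G te
  set M := max (tierSize Γ 1 X (R.store 0)) A
  have hXc : varsC c ⊆ X := Finset.subset_union_right.trans hX
  have hA' : ∀ i < R.len, maxAnswer φ (R.queries i) ≤ A :=
    fun i hi => (maxAnswer_mono (hq i hi)).trans hA
  have hlen := R.len_le_of_subset hS he hc hB hX
  have hsize : ∀ i ∈ Finset.range R.len, sizeE e + R.size i + 1 ≤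
      sizeE e + 1 + P.eval (M + F.eval M) := by
    intro i hi
    have hi := Finset.mem_range.1 hi
    have hstore : tierSize Γ 1 X (R.store i) ≤ M + F.eval M :=
      (R.tierSize_le hB hG hXc hA' hlen te 1 (by omega) i hi.le).trans
      (add_le_add le_rfl (F.monotone_eval_nat tierSize_max_succ_le))
    have : R.size i ≤ P.eval (M + F.eval M) := (hP (R.body i hi) hXc (hA' i hi)).trans
      (P.monotone_eval_nat (max_le hstore (by omega)))
    omega
  have hlenM : R.len ≤ N.eval M :=
    hlen.trans (N.monotone_eval_nat (le_max_of_le_left (tierSize_mono hte subset_rfl)))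
  simp only [Polynomial.eval_mul, Polynomial.eval_add, Polynomial.eval_one, Polynomial.eval_C,
    Polynomial.eval_comp, Polynomial.eval_X]
  calc ∑ i ∈ Finset.range R.len, (sizeE e + R.size i + 1) + (sizeE e + 1)
      ≤ R.len * (sizeE e + 1 + P.eval (M + F.eval M)) + (sizeE e + 1 + P.eval (M + F.eval M)) :=
        add_le_add (by simpa using Finset.sum_le_card_nsmul _ _ _ hsize) (le_add_right le_rfl)
    _ ≤ (N.eval M + 1) * (sizeE e + 1 + P.eval (M + F.eval M)) := by
        rw [add_one_mul]
        exact add_le_add (Nat.mul_le_mul_right _ hlenM) le_rfl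

end Loop

section Typing

variable {Γ : ℕ → ℕ} {Δ : OpEnv S} {c₁ c₂ : Cmd S} {τ : ℕ}

theorem TierInvariants.seq (h₁ : TierInvariants Γ c₁ τ) (h₂ : TierInvariants Γ c₂ τ) :
    TierInvariants Γ (.seq c₁ c₂) τ := by
  obtain ⟨⟨P₁, hP₁⟩, ⟨B₁, hB₁⟩, ⟨G₁, hG₁⟩⟩ := h₁
  obtain ⟨⟨P₂, hP₂⟩, ⟨B₂, hB₂⟩, ⟨G₂, hG₂⟩⟩ := h₂
  exact ⟨⟨_, hP₁.seq hG₁ hP₂⟩, ⟨_, hB₁.seq hB₂⟩, ⟨_, hG₁.seq hG₂⟩⟩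

theorem TierInvariants.ite {e : Expr S} (h₁ : TierInvariants Γ c₁ τ)
    (h₂ : TierInvariants Γ c₂ τ) : TierInvariants Γ (.ite e c₁ c₂) τ := by
  obtain ⟨⟨P₁, hP₁⟩, ⟨B₁, hB₁⟩, ⟨G₁, hG₁⟩⟩ := h₁
  obtain ⟨⟨P₂, hP₂⟩, ⟨B₂, hB₂⟩, ⟨G₂, hG₂⟩⟩ := h₂
  exact ⟨⟨_, hP₁.ite hP₂⟩, ⟨_, hB₁.ite hB₂⟩, ⟨_, hG₁.ite hG₂⟩⟩

theorem TierInvariants.wh (hS : SafeDelta S Δ) {e : Expr S} {c : Cmd S} {te tin tout tout' : ℕ}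
    (he : TE S Γ Δ e te tin tout) (hc : TC S Γ Δ c te te tout') (hte : 1 ≤ te)
    (h : TierInvariants Γ c te) : TierInvariants Γ (.wh e c) te := by
  obtain ⟨⟨P, hP⟩, ⟨B, hB⟩, ⟨G, hG⟩⟩ := h
  exact ⟨⟨_, hP.wh hS he hc hte hB hG⟩, ⟨_, hB.wh⟩, ⟨_, hG.wh hS he hc hB⟩⟩

theorem TC.tierInvariants (hS : SafeDelta S Δ) {c : Cmd S} {t tin tout : ℕ}
    (h : TC S Γ Δ c t tin tout) : TierInvariants Γ c (max tin t) := by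
  induction h with
  | sub _ ih => exact ih.mono (max_le_max le_rfl (Nat.le_succ _))
  | skip => exact tierInvariants_skip.mono (Nat.zero_le _)
  | assign he hxe => exact tierInvariants_assign hS he hxe
  | seq _ _ ih₁ ih₂ => exact ih₁.seq ih₂
  | ite _ _ _ ih₁ ih₂ => exact ih₁.ite ih₂
  | whW he hc hte _ ih =>
    exact (TierInvariants.wh hS he hc hte (by rwa [max_self] at ih)).mono (le_max_right _ _)
  | wh0 he hc hte ih =>
    exact (TierInvariants.wh hS he hc hte (by rwa [max_self] at ih)).mono (le_max_right _ _)

end Typing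

/-- **Polynomial step count corollary.** If a program `p` is in `ST` (safe and
terminating), then `p` has a polynomial step count. -/
theorem polyStepCount_of_ST (S : Sig) (p : Prog S) (hp : p ∈ STset S) :
    p.PolyStepCount := by
  obtain ⟨⟨Γ, Δ, hS, _, _, _, htc⟩, -⟩ := hp
  obtain ⟨P, hP⟩ := (htc.tierInvariants hS).stepBound
  refine ⟨P, fun φ μ μ' n q h => ?_⟩
  have hstore : tierSize Γ 1 p.vars μ ≤ storeSize p μ := tierSize_le_iff.2 fun x hx _ =>
    Finset.single_le_sum (f := fun x => (μ x).length) (fun _ _ => Nat.zero_le _) hx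
  exact (hP h (X := p.vars) Finset.subset_union_left le_rfl).trans
    (P.monotone_eval_nat (max_le_max hstore le_rfl))

end BFFpaper
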